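/- Define u(y₁,y₂) := y₁/√2 + (√6/2)·y₂ and v(y₁,y₂) := −y₁/√2 + (√6/2)·y₂, and define X = (X¹, X²) with X¹(y₁,y₂) := −4·( √2·cot(√2·y₁) + (√2 − 1/√2)·cot(u(y₁,y₂)) − (1/√2)·cot(v(y₁,y₂)) ) and X²(y₁,y₂) := −2√6·( cot(u(y₁,y₂)) + cot(v(y₁,y₂)) ). Then at every point (y₁,y₂) with √2·y₁ ∈ (0,π), u(y₁,y₂) ∈ (0,π) and v(y₁,y₂) ∈ (0,π), the divergence ∂X¹/∂y₁ + ∂X²/∂y₂ equals 8·( 1/sin²(√2·y₁) + 1/sin²(u(y₁,y₂)) + 1/sin²(v(y₁,y₂)) ); in particular it is strictly positive. -/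

import Mathlib

/-!
Both components of `X` are constant-coefficient combinations of `cot` of linear forms in
`(y₁, y₂)`, and `cot' = -1 / sin²`. Since `(√2 - 1/√2) · (1/√2) = (1/√2)² = 1/2`, this gives
`∂X¹/∂y₁ = 8/sin²(√2 y₁) + 2/sin² u + 2/sin² v` and, from `(√6/2)·2√6 = 6`,
`∂X²/∂y₂ = 6/sin² u + 6/sin² v`; their sum is `8 Σ 1/sin²`, positive because the three sines
do not vanish on `(0, π)`.
-/

open Real

noncomputable def uCoord (y₁ y₂ : ℝ) : ℝ := y₁ / Real.sqrt 2 + (Real.sqrt 6 / 2) * y₂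

noncomputable def vCoord (y₁ y₂ : ℝ) : ℝ := -y₁ / Real.sqrt 2 + (Real.sqrt 6 / 2) * y₂

/-- First component of the mean curvature vector field of the parallel orbits of the
isotropy action of `Sp(3)` on `SU(6)/Sp(3)`, in orthonormal coordinates. -/
noncomputable def XOne (y₁ y₂ : ℝ) : ℝ :=
  -4 * (Real.sqrt 2 * Real.cot (Real.sqrt 2 * y₁) +
        (Real.sqrt 2 - 1 / Real.sqrt 2) * Real.cot (uCoord y₁ y₂) -
        (1 / Real.sqrt 2) * Real.cot (vCoord y₁ y₂))

/-- Second component of the mean curvature vector field. -/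
noncomputable def XTwo (y₁ y₂ : ℝ) : ℝ :=
  -2 * Real.sqrt 6 * (Real.cot (uCoord y₁ y₂) + Real.cot (vCoord y₁ y₂))

theorem Real.hasDerivAt_cot {x : ℝ} (hx : sin x ≠ 0) :
    HasDerivAt cot (-1 / sin x ^ 2) x := by
  have hquot := (hasDerivAt_cos x).div (hasDerivAt_sin x) hx
  rw [show cot = fun x => cos x / sin x from funext cot_eq_cos_div_sin]
  refine hquot.congr_deriv ?_
  rw [div_eq_div_iff (pow_ne_zero 2 hx) (pow_ne_zero 2 hx)]
  linear_combination (-sin x ^ 2) * sin_sq_add_cos_sq x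

theorem HasDerivAt.cot {f : ℝ → ℝ} {f' x : ℝ} (hf : HasDerivAt f f' x)
    (hx : Real.sin (f x) ≠ 0) :
    HasDerivAt (fun y => Real.cot (f y)) (-f' / Real.sin (f x) ^ 2) x :=
  ((hasDerivAt_cot hx).comp x hf).congr_deriv (by ring)

theorem hasDerivAt_uCoord_left (y₁ y₂ : ℝ) :
    HasDerivAt (fun y => uCoord y y₂) (1 / √2) y₁ := by
  simpa [uCoord] using ((hasDerivAt_id y₁).div_const √2).add_const (√6 / 2 * y₂)

theorem hasDerivAt_vCoord_left (y₁ y₂ : ℝ) :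
    HasDerivAt (fun y => vCoord y y₂) (-1 / √2) y₁ := by
  simpa [vCoord] using ((hasDerivAt_id y₁).neg.div_const √2).add_const (√6 / 2 * y₂)

theorem hasDerivAt_uCoord_right (y₁ y₂ : ℝ) :
    HasDerivAt (fun y => uCoord y₁ y) (√6 / 2) y₂ := by
  simpa [uCoord] using ((hasDerivAt_id y₂).const_mul (√6 / 2)).const_add (y₁ / √2)

theorem hasDerivAt_vCoord_right (y₁ y₂ : ℝ) :
    HasDerivAt (fun y => vCoord y₁ y) (√6 / 2) y₂ := by
  simpa [vCoord] using ((hasDerivAt_id y₂).const_mul (√6 / 2)).const_add (-y₁ / √2)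

theorem hasDerivAt_XOne_left {y₁ y₂ : ℝ} (hs : sin (√2 * y₁) ≠ 0)
    (hu : sin (uCoord y₁ y₂) ≠ 0) (hv : sin (vCoord y₁ y₂) ≠ 0) :
    HasDerivAt (fun y => XOne y y₂)
      (8 / sin (√2 * y₁) ^ 2 + 2 / sin (uCoord y₁ y₂) ^ 2 + 2 / sin (vCoord y₁ y₂) ^ 2) y₁ := by
  have hlin : HasDerivAt (fun y => √2 * y) √2 y₁ := by
    simpa using (hasDerivAt_id y₁).const_mul √2
  have hX := ((((hlin.cot hs).const_mul √2).add
    (((hasDerivAt_uCoord_left y₁ y₂).cot hu).const_mul (√2 - 1 / √2))).sub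
    (((hasDerivAt_vCoord_left y₁ y₂).cot hv).const_mul (1 / √2))).const_mul (-4)
  refine hX.congr_deriv ?_
  have h2 : √2 ^ 2 = 2 := sq_sqrt (by norm_num)
  field_simp
  rw [show √2 ^ 4 = (√2 ^ 2) ^ 2 by ring, h2]
  ring

theorem hasDerivAt_XTwo_right {y₁ y₂ : ℝ}
    (hu : sin (uCoord y₁ y₂) ≠ 0) (hv : sin (vCoord y₁ y₂) ≠ 0) :
    HasDerivAt (fun y => XTwo y₁ y)
      (6 / sin (uCoord y₁ y₂) ^ 2 + 6 / sin (vCoord y₁ y₂) ^ 2) y₂ := by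
  have hX := (((hasDerivAt_uCoord_right y₁ y₂).cot hu).add
    ((hasDerivAt_vCoord_right y₁ y₂).cot hv)).const_mul (-2 * √6)
  refine hX.congr_deriv ?_
  have h6 : √6 ^ 2 = 6 := sq_sqrt (by norm_num)
  field_simp
  rw [h6]
  ring

/-- At every point with `√2 y₁ ∈ (0,π)`, `u(y₁,y₂) ∈ (0,π)` and `v(y₁,y₂) ∈ (0,π)`, the
divergence `∂X¹/∂y₁ + ∂X²/∂y₂` equals
`8 (1/sin²(√2 y₁) + 1/sin²(u(y₁,y₂)) + 1/sin²(v(y₁,y₂)))`; in particular it is positive. -/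
theorem stmt_7 (y₁ y₂ : ℝ)
    (h1 : Real.sqrt 2 * y₁ ∈ Set.Ioo 0 π)
    (h2 : uCoord y₁ y₂ ∈ Set.Ioo 0 π)
    (h3 : vCoord y₁ y₂ ∈ Set.Ioo 0 π) :
    ∃ d₁ d₂ : ℝ,
      HasDerivAt (fun y => XOne y y₂) d₁ y₁ ∧
      HasDerivAt (fun y => XTwo y₁ y) d₂ y₂ ∧
      d₁ + d₂ = 8 * (1 / (Real.sin (Real.sqrt 2 * y₁)) ^ 2 +
                     1 / (Real.sin (uCoord y₁ y₂)) ^ 2 +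
                     1 / (Real.sin (vCoord y₁ y₂)) ^ 2) ∧
      0 < d₁ + d₂ := by
  have hs := sin_pos_of_pos_of_lt_pi h1.1 h1.2
  have hu := sin_pos_of_pos_of_lt_pi h2.1 h2.2
  have hv := sin_pos_of_pos_of_lt_pi h3.1 h3.2
  refine ⟨_, _, hasDerivAt_XOne_left hs.ne' hu.ne' hv.ne', hasDerivAt_XTwo_right hu.ne' hv.ne',
    by ring, by positivity⟩
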